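/- arXiv:1910.05254 — 3 statements merged into one kernel-verified Lean document; each statement's English description precedes it below -/
import Mathlib

section
/- If G is a 3-colourable graph with no induced K_{1,3} (claw-free), then ioct(G) ≤ 3·oct(G). -/
open SimpleGraph

/-- `S` is an independent set of `G`. -/
def IsIS {V : Type*} (G : SimpleGraph V) (S : Set V) : Prop :=
  S.Pairwise fun u v => ¬ G.Adj u v

/-- `G` contains no induced subgraph isomorphic to `H`. -/
def HFree {W V : Type*} (H : SimpleGraph W) (G : SimpleGraph V) : Prop :=
  IsEmpty (H ↪g G)

/-- `G` is bipartite: the vertex set splits into two independent sets. -/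
def IsBip {V : Type*} (G : SimpleGraph V) : Prop :=
  ∃ X : Set V, IsIS G X ∧ IsIS G Xᶜ

/-- `S` is a vertex cover of `G`. -/
def IsVC {V : Type*} (G : SimpleGraph V) (S : Finset V) : Prop :=
  ∀ ⦃u v⦄, G.Adj u v → u ∈ S ∨ v ∈ S

/-- minimum size of a vertex cover. -/
noncomputable def vc {V : Type*} (G : SimpleGraph V) : ℕ :=
  sInf {n | ∃ S : Finset V, IsVC G S ∧ S.card = n}

/-- minimum size of an independent vertex cover. -/
noncomputable def ivc {V : Type*} (G : SimpleGraph V) : ℕ :=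
  sInf {n | ∃ S : Finset V, IsVC G S ∧ IsIS G ↑S ∧ S.card = n}

/-- `S` is an odd cycle transversal of `G`: removing it leaves a bipartite graph. -/
def IsOCT {V : Type*} (G : SimpleGraph V) (S : Finset V) : Prop :=
  (G.induce ((S : Set V)ᶜ)).Colorable 2

/-- minimum size of an odd cycle transversal. -/
noncomputable def oct {V : Type*} (G : SimpleGraph V) : ℕ :=
  sInf {n | ∃ S : Finset V, IsOCT G S ∧ S.card = n}

/-- minimum size of an independent odd cycle transversal. -/
noncomputable def ioct {V : Type*} (G : SimpleGraph V) : ℕ :=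
  sInf {n | ∃ S : Finset V, IsOCT G S ∧ IsIS G ↑S ∧ S.card = n}

/-- The star `K_{1,r}`: one centre adjacent to `r` leaves. -/
def starG (r : ℕ) : SimpleGraph (Unit ⊕ Fin r) :=
  SimpleGraph.fromRel fun u v => ∃ i : Fin r, u = Sum.inl () ∧ v = Sum.inr i


open Finset


lemma three_distinct {V : Type*} [DecidableEq V] {s : Finset V} (h : 3 ≤ s.card) :
    ∃ x ∈ s, ∃ y ∈ s, ∃ z ∈ s, x ≠ y ∧ x ≠ z ∧ y ≠ z := by
  have h0 : 0 < s.card := by omega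
  obtain ⟨x, hx⟩ := Finset.card_pos.mp h0
  have he1 := Finset.card_erase_of_mem hx
  have h1 : 0 < (s.erase x).card := by omega
  obtain ⟨y, hy⟩ := Finset.card_pos.mp h1
  have he2 := Finset.card_erase_of_mem hy
  have h2 : 0 < ((s.erase x).erase y).card := by omega
  obtain ⟨z, hz⟩ := Finset.card_pos.mp h2
  refine ⟨x, hx, y, (Finset.mem_erase.mp hy).2, z,
    (Finset.mem_erase.mp (Finset.mem_erase.mp hz).2).2, ?_, ?_, ?_⟩
  · exact fun e => (Finset.mem_erase.mp hy).1 e.symm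
  · exact fun e => (Finset.mem_erase.mp (Finset.mem_erase.mp hz).2).1 e.symm
  · exact fun e => (Finset.mem_erase.mp hz).1 e.symm

lemma slot_lemma {V : Type*} [Fintype V] [DecidableEq V] (H : SimpleGraph V) [DecidableRel H.Adj]
    (r : V) (a : V → ℕ)
    (hcap : ∀ v, H.Reachable r v → H.degree v + a v ≤ 2) :
    ∑ v ∈ Finset.univ.filter (fun v => H.Reachable r v), a v ≤ 2 := by
  classical
  let K : Finset V := Finset.univ.filter (fun v => H.Reachable r v)
  have memK : ∀ v, v ∈ K ↔ H.Reachable r v := by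
    intro v; simp [K]
  show ∑ v ∈ K, a v ≤ 2
  have hrK : r ∈ K := (memK r).mpr (SimpleGraph.Reachable.refl r)
  have key : ∀ v, H.Reachable r v → v ≠ r →
      ∃ u, H.Adj u v ∧ H.Reachable r u ∧ H.dist r u < H.dist r v := by
    intro v hv hne
    obtain ⟨q, hq⟩ := (hv.symm).exists_walk_length_eq_dist
    cases q with
    | nil => exact absurd rfl hne
    | @cons _ w _ h q' =>
      refine ⟨w, h.symm, hv.trans ⟨SimpleGraph.Walk.cons h SimpleGraph.Walk.nil⟩, ?_⟩
      have h1 : H.dist r w ≤ q'.length := by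
        rw [SimpleGraph.dist_comm]; exact SimpleGraph.dist_le q'
      have h2 : H.dist v r = q'.length + 1 := by
        rw [← hq]; simp [SimpleGraph.Walk.length_cons]
      rw [SimpleGraph.dist_comm (u := r) (v := v)]
      omega
  let m : V → V := fun v => if h : H.Reachable r v ∧ v ≠ r then (key v h.1 h.2).choose else v
  have hm : ∀ v, H.Reachable r v → v ≠ r →
      H.Adj v (m v) ∧ H.Reachable r (m v) ∧ H.dist r (m v) < H.dist r v := by
    intro v hv hne
    have hspec := (key v hv hne).choose_spec
    simp only [m, dif_pos (And.intro hv hne)]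
    exact ⟨hspec.1.symm, hspec.2.1, hspec.2.2⟩
  let P2 : Finset (V × V) := K.biUnion (fun v => ({v} ×ˢ H.neighborFinset v))
  have hP2card : P2.card = ∑ v ∈ K, H.degree v := by
    rw [Finset.card_biUnion]
    · apply Finset.sum_congr rfl
      intro v _
      rw [Finset.card_product, Finset.card_singleton, one_mul]
      rfl
    · intro x _ y _ hxy
      simp only [Finset.disjoint_left]
      intro p hp hq
      simp only [Finset.mem_product, Finset.mem_singleton] at hp hq
      exact hxy (hp.1.symm.trans hq.1)
  have memP2 : ∀ p : V × V, p ∈ P2 ↔ p.1 ∈ K ∧ H.Adj p.1 p.2 := by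
    intro p
    constructor
    · intro hp
      obtain ⟨v, hv, hp2⟩ := Finset.mem_biUnion.mp hp
      simp only [Finset.mem_product, Finset.mem_singleton] at hp2
      rcases hp2 with ⟨h1, h2⟩
      subst h1
      exact ⟨hv, by simpa using h2⟩
    · intro ⟨h1, h2⟩
      exact Finset.mem_biUnion.mpr ⟨p.1, h1,
        Finset.mem_product.mpr ⟨Finset.mem_singleton_self _,
          (SimpleGraph.mem_neighborFinset _ _ _).mpr h2⟩⟩
  have hmem : ∀ v ∈ K.erase r, H.Reachable r v ∧ v ≠ r := by
    intro v hv
    have h1 := Finset.mem_erase.mp hv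
    exact ⟨(memK v).mp h1.2, h1.1⟩
  let A : Finset (V × V) := (K.erase r).image (fun v => (v, m v))
  let B : Finset (V × V) := (K.erase r).image (fun v => (m v, v))
  have hAsub : A ⊆ P2 := by
    intro p hp
    obtain ⟨v, hv, rfl⟩ := Finset.mem_image.mp hp
    obtain ⟨h1, h2⟩ := hmem v hv
    exact (memP2 _).mpr ⟨(memK v).mpr h1, (hm v h1 h2).1⟩
  have hBsub : B ⊆ P2 := by
    intro p hp
    obtain ⟨v, hv, rfl⟩ := Finset.mem_image.mp hp
    obtain ⟨h1, h2⟩ := hmem v hv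
    have h3 := hm v h1 h2
    exact (memP2 _).mpr ⟨(memK _).mpr h3.2.1, h3.1.symm⟩
  have hAcard : A.card = (K.erase r).card :=
    Finset.card_image_of_injective _ (fun x y hxy => congrArg Prod.fst hxy)
  have hBcard : B.card = (K.erase r).card :=
    Finset.card_image_of_injective _ (fun x y hxy => congrArg Prod.snd hxy)
  have hdisj : Disjoint A B := by
    rw [Finset.disjoint_left]
    intro p hp hq
    obtain ⟨v, hv, hv2⟩ := Finset.mem_image.mp hp
    obtain ⟨w, hw, hw2⟩ := Finset.mem_image.mp hq
    obtain ⟨hv1, hvne⟩ := hmem v hv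
    obtain ⟨hw1, hwne⟩ := hmem w hw
    rw [← hw2] at hv2
    have e1 : v = m w := congrArg Prod.fst hv2
    have e2 : m v = w := congrArg Prod.snd hv2
    have d1 := (hm v hv1 hvne).2.2
    have d2 := (hm w hw1 hwne).2.2
    rw [e2] at d1; rw [← e1] at d2
    omega
  have hUnion : (A ∪ B).card ≤ P2.card :=
    Finset.card_le_card (Finset.union_subset hAsub hBsub)
  rw [Finset.card_union_of_disjoint hdisj, hAcard, hBcard] at hUnion
  have hKcard : (K.erase r).card = K.card - 1 := Finset.card_erase_of_mem hrK
  have hsum : ∑ v ∈ K, (H.degree v + a v) ≤ 2 * K.card := by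
    calc ∑ v ∈ K, (H.degree v + a v) ≤ ∑ _v ∈ K, 2 :=
          Finset.sum_le_sum (fun v hv => hcap v ((memK v).mp hv))
      _ = 2 * K.card := by rw [Finset.sum_const]; ring
  rw [Finset.sum_add_distrib] at hsum
  have hKpos : 1 ≤ K.card := Finset.card_pos.mpr ⟨r, hrK⟩
  rw [hP2card] at hUnion
  omega


/-- auxiliary graph: far region induced graph (on same vertex type) -/
def farG {V : Type*} (G : SimpleGraph V) (F : Set V) : SimpleGraph V where
  Adj x y := G.Adj x y ∧ x ∈ F ∧ y ∈ F
  symm := by refine ⟨?_⟩; intro x y h; exact ⟨h.1.symm, h.2.2, h.2.1⟩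
  loopless := by refine ⟨?_⟩; intro x h; exact G.irrefl h.1

/-- property of a good colouring of one far component `Ks` -/
def compProp {V : Type*} (G : SimpleGraph V) (F : Set V) (c₀ : V → ℕ)
    (Ks : Set V) (ψ : V → ℕ) : Prop :=
  (∀ x ∈ Ks, ψ x < 3) ∧
  (∀ x ∈ Ks, ∀ y ∈ Ks, G.Adj x y → ψ x ≠ ψ y) ∧
  (∀ x ∈ Ks, ∀ u, G.Adj x u → u ∉ F → ψ x ≠ c₀ u) ∧
  (∀ x ∈ Ks, ψ x = 2 → ∀ y ∈ Ks, ψ y = 2 → x = y) ∧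
  (∀ x ∈ Ks, ψ x = 2 → ∃ u1 u2 : V, u1 ≠ u2 ∧ u1 ∉ F ∧ u2 ∉ F ∧ c₀ u1 ≠ 2 ∧ c₀ u2 ≠ 2 ∧
     (∃ q ∈ Ks, G.Adj q u1) ∧ (∃ q ∈ Ks, G.Adj q u2))

lemma farG_walk_mem {V : Type*} {G : SimpleGraph V} {F : Set V} :
    ∀ {u v : V}, (farG G F).Walk u v → u ∈ F → v ∈ F := by
  intro u v w
  induction w with
  | nil => exact id
  | cons h _ ih => exact fun _ => ih h.2.2

section
variable {V : Type*} [Fintype V] (G : SimpleGraph V)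

lemma comp_coloring (F : Set V) (b c₀ : V → ℕ)
    [DecidableRel G.Adj]
    (hdeg : ∀ q ∈ F, G.degree q ≤ 2)
    (huniq : ∀ u, u ∉ F → ∀ q ∈ F, ∀ q' ∈ F, G.Adj u q → G.Adj u q' → q = q')
    (hb2 : ∀ v, b v < 2)
    (hbF : ∀ x ∈ F, ∀ y ∈ F, G.Adj x y → b x ≠ b y)
    (v₀ : V) (hv₀ : v₀ ∈ F) :
    ∃ ψ : V → ℕ, compProp G F c₀ {x | (farG G F).Reachable v₀ x} ψ := by
  classical
  set K : Set V := {x | (farG G F).Reachable v₀ x} with hKdef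
  have hKF : ∀ x ∈ K, x ∈ F := by
    intro x hx
    obtain ⟨w⟩ := hx
    exact farG_walk_mem w hv₀
  by_cases hw1 : ∀ x ∈ K, ∀ u, G.Adj x u → u ∉ F → b x ≠ c₀ u
  · refine ⟨b, fun x _ => by have := hb2 x; omega,
      fun x hx y hy hadj => hbF x (hKF x hx) y (hKF y hy) hadj, hw1,
      fun x _ h2 => absurd h2 (by have := hb2 x; omega),
      fun x _ h2 => absurd h2 (by have := hb2 x; omega)⟩
  by_cases hw2 : ∀ x ∈ K, ∀ u, G.Adj x u → u ∉ F → 1 - b x ≠ c₀ u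
  · refine ⟨fun v => 1 - b v, fun x _ => by dsimp only; have := hb2 x; omega,
      fun x hx y hy hadj => by
        dsimp only
        have := hbF x (hKF x hx) y (hKF y hy) hadj
        have h1 := hb2 x; have h2 := hb2 y; omega, hw2,
      fun x _ h2 => absurd h2 (by dsimp only; have := hb2 x; omega),
      fun x _ h2 => absurd h2 (by dsimp only; have := hb2 x; omega)⟩
  push_neg at hw1 hw2
  obtain ⟨q1, hq1K, u1, hadj1, hu1F, hc1⟩ := hw1
  obtain ⟨q2, hq2K, u2, hadj2, hu2F, hc2⟩ := hw2
  -- c₀ u1 = b q1 ; c₀ u2 = 1 - b q2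
  have hne12 : u1 ≠ u2 := by
    intro h
    subst h
    have := huniq u1 hu1F q1 (hKF _ hq1K) q2 (hKF _ hq2K) hadj1.symm hadj2.symm
    subst this
    have := hb2 q1
    omega
  -- slot lemma
  letI : DecidableRel (farG G F).Adj := Classical.decRel _
  have hcap : ∀ v, (farG G F).Reachable v₀ v →
      (farG G F).degree v + ((G.neighborFinset v).filter (fun u => u ∉ F)).card ≤ 2 := by
    intro v hv
    have hvF : v ∈ F := hKF v hv
    have hnb : (farG G F).neighborFinset v = (G.neighborFinset v).filter (fun u => u ∈ F) := by
      ext w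
      rw [SimpleGraph.mem_neighborFinset]
      simp only [SimpleGraph.mem_neighborFinset, Finset.mem_filter, farG]
      constructor
      · intro h; exact ⟨h.1, h.2.2⟩
      · intro h; exact ⟨h.1, hvF, h.2⟩
    have : (farG G F).degree v = ((G.neighborFinset v).filter (fun u => u ∈ F)).card := by
      rw [SimpleGraph.degree, hnb]
    rw [this]
    rw [Finset.card_filter_add_card_filter_not (fun u => u ∈ F)]
    exact hdeg v hvF
  have hslot := slot_lemma (farG G F) v₀ _ hcap
  -- the slot set
  set KF : Finset V := Finset.univ.filter (fun v => (farG G F).Reachable v₀ v) with hKFdef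
  have memKF : ∀ v, v ∈ KF ↔ v ∈ K := by intro v; simp [hKFdef, hKdef]
  set SL : Finset (V × V) :=
    KF.biUnion (fun v => ((G.neighborFinset v).filter (fun u => u ∉ F)).image (fun u => (v, u)))
    with hSLdef
  have memSL : ∀ p : V × V, p ∈ SL ↔ p.1 ∈ K ∧ G.Adj p.1 p.2 ∧ p.2 ∉ F := by
    intro p
    rw [hSLdef]
    constructor
    · intro hp
      obtain ⟨v, hv, hp2⟩ := Finset.mem_biUnion.mp hp
      obtain ⟨u, hu, he⟩ := Finset.mem_image.mp hp2
      rw [Finset.mem_filter, SimpleGraph.mem_neighborFinset] at hu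
      subst he
      exact ⟨(memKF v).mp hv, hu.1, hu.2⟩
    · intro ⟨h1, h2, h3⟩
      refine Finset.mem_biUnion.mpr ⟨p.1, (memKF _).mpr h1, Finset.mem_image.mpr ⟨p.2, ?_, rfl⟩⟩
      rw [Finset.mem_filter, SimpleGraph.mem_neighborFinset]
      exact ⟨h2, h3⟩
  have hSLcard : SL.card ≤ 2 := by
    rw [hSLdef, Finset.card_biUnion]
    · calc ∑ v ∈ KF, (((G.neighborFinset v).filter (fun u => u ∉ F)).image (fun u => (v, u))).card
          = ∑ v ∈ KF, ((G.neighborFinset v).filter (fun u => u ∉ F)).card := by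
            apply Finset.sum_congr rfl
            intro v _
            exact Finset.card_image_of_injective _ (fun x y h => congrArg Prod.snd h)
        _ ≤ 2 := hslot
    · intro x _ y _ hxy
      rw [Function.onFun, Finset.disjoint_left]
      intro p hp hq
      obtain ⟨u, _, he⟩ := Finset.mem_image.mp hp
      obtain ⟨u', _, he'⟩ := Finset.mem_image.mp hq
      apply hxy
      rw [← he'] at he
      exact congrArg Prod.fst he
  have hS1 : (q1, u1) ∈ SL := (memSL _).mpr ⟨hq1K, hadj1, hu1F⟩
  have hS2 : (q2, u2) ∈ SL := (memSL _).mpr ⟨hq2K, hadj2, hu2F⟩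
  have hpne : (q1, u1) ≠ (q2, u2) := fun h => hne12 (congrArg Prod.snd h)
  -- classification of slots
  have hclass : ∀ q ∈ K, ∀ u, G.Adj q u → u ∉ F → (q = q1 ∧ u = u1) ∨ (q = q2 ∧ u = u2) := by
    intro q hq u hadj huF
    by_contra hcon
    push_neg at hcon
    have hmem : (q, u) ∈ SL := (memSL _).mpr ⟨hq, hadj, huF⟩
    have hne1 : (q, u) ≠ (q1, u1) := by
      intro h
      exact hcon.1 (congrArg Prod.fst h) (congrArg Prod.snd h)
    have hne2 : (q, u) ≠ (q2, u2) := by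
      intro h
      exact hcon.2 (congrArg Prod.fst h) (congrArg Prod.snd h)
    have h3 : ({(q, u), (q1, u1), (q2, u2)} : Finset (V × V)) ⊆ SL := by
      intro p hp
      simp only [Finset.mem_insert, Finset.mem_singleton] at hp
      rcases hp with rfl | rfl | rfl
      · exact hmem
      · exact hS1
      · exact hS2
    have hc3 : ({(q, u), (q1, u1), (q2, u2)} : Finset (V × V)).card = 3 := by
      rw [Finset.card_insert_of_notMem, Finset.card_insert_of_notMem]
      · rfl
      · simpa using hpne
      · simp only [Finset.mem_insert, Finset.mem_singleton]
        push_neg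
        exact ⟨hne1, hne2⟩
    have := Finset.card_le_card h3
    omega
  -- the stuck colouring
  set H' : SimpleGraph V := farG G (F \ {q1}) with hH'def
  set ψ : V → ℕ := fun x => if x = q1 then 2 else
      (if H'.Reachable x q2 ∧ c₀ u2 = b q2 then 1 - b x else b x) with hψdef
  have hψq1 : ψ q1 = 2 := by simp [hψdef]
  have hψother : ∀ x, x ≠ q1 → ψ x = 1 - b x ∨ ψ x = b x := by
    intro x hxne
    rw [hψdef]
    simp only [if_neg hxne]
    by_cases h3 : H'.Reachable x q2 ∧ c₀ u2 = b q2
    · left; rw [if_pos h3]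
    · right; rw [if_neg h3]
  have hψsmall : ∀ x, x ≠ q1 → ψ x < 2 := by
    intro x hxne
    rcases hψother x hxne with h | h <;> (rw [h]; have := hb2 x; omega)
  have h2iff : ∀ x, ψ x = 2 → x = q1 := by
    intro x hx
    by_contra h
    have := hψsmall x h
    omega
  refine ⟨ψ, ?_, ?_, ?_, ?_, ?_⟩
  · intro x _
    by_cases h1 : x = q1
    · rw [h1, hψq1]; omega
    · have := hψsmall x h1; omega
  · -- proper
    intro x hx y hy hadj
    by_cases h1 : x = q1
    · subst h1
      have h2 : y ≠ x := fun h => G.irrefl (h ▸ hadj)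
      rw [hψq1]
      have := hψsmall y h2
      omega
    · by_cases h2 : y = q1
      · subst h2
        rw [hψq1]
        have := hψsmall x h1
        omega
      · have hH'adj : H'.Adj x y := by
          rw [hH'def]
          exact ⟨hadj, ⟨hKF x hx, h1⟩, ⟨hKF y hy, h2⟩⟩
        have hiff : (H'.Reachable x q2 ∧ c₀ u2 = b q2) ↔ (H'.Reachable y q2 ∧ c₀ u2 = b q2) := by
          constructor
          · intro ⟨hr, hc⟩; exact ⟨(hH'adj.symm.reachable).trans hr, hc⟩
          · intro ⟨hr, hc⟩; exact ⟨(hH'adj.reachable).trans hr, hc⟩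
        have hbxy := hbF x (hKF x hx) y (hKF y hy) hadj
        have hx2 := hb2 x; have hy2 := hb2 y
        rw [hψdef]
        simp only [if_neg h1, if_neg h2]
        by_cases h3 : H'.Reachable x q2 ∧ c₀ u2 = b q2
        · rw [if_pos h3, if_pos (hiff.mp h3)]; omega
        · rw [if_neg h3, if_neg (fun h => h3 (hiff.mpr h))]; omega
  · -- anchor compatibility
    intro x hx u hadj huF
    rcases hclass x hx u hadj huF with ⟨he1, he2⟩ | ⟨he1, he2⟩
    · subst he1; subst he2
      rw [hψq1, ← hc1]
      have := hb2 x
      omega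
    · subst he1; subst he2
      by_cases h1 : x = q1
      · rw [h1, hψq1, ← hc2]
        have := hb2 x
        omega
      · have hrefl : H'.Reachable x x := SimpleGraph.Reachable.refl x
        rw [hψdef]
        simp only [if_neg h1]
        by_cases h3 : c₀ u = b x
        · rw [if_pos ⟨hrefl, h3⟩]
          have := hb2 x
          omega
        · rw [if_neg (fun h => h3 h.2)]
          exact fun h => h3 h.symm
  · -- at most one 2
    intro x _ h2x y _ h2y
    rw [h2iff x h2x, h2iff y h2y]
  · -- witnesses
    intro x _ _
    refine ⟨u1, u2, hne12, hu1F, hu2F, ?_, ?_, ⟨q1, hq1K, hadj1⟩, ⟨q2, hq2K, hadj2⟩⟩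
    · have := hb2 q1; omega
    · have := hb2 q2; omega

end


section
variable {V : Type*} [Fintype V]

theorem main_tech (G : SimpleGraph V) [DecidableRel G.Adj]
    (claw : ∀ z x y w : V, G.Adj z x → G.Adj z y → G.Adj z w → x ≠ y → x ≠ w → y ≠ w →
      ¬G.Adj x y → ¬G.Adj x w → ¬G.Adj y w → False)
    (c₀ : V → ℕ) (hc3 : ∀ v, c₀ v < 3) (hcp : ∀ ⦃x y⦄, G.Adj x y → c₀ x ≠ c₀ y)
    (S : Finset V)
    (b : V → ℕ) (hb2 : ∀ v, b v < 2) (hbp : ∀ ⦃x y⦄, G.Adj x y → x ∉ S → y ∉ S → b x ≠ b y) :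
    ∃ φ : V → ℕ, (∀ v, φ v < 3) ∧ (∀ ⦃x y⦄, G.Adj x y → φ x ≠ φ y) ∧
      (Finset.univ.filter (fun v => φ v = 2)).card ≤ 3 * S.card := by
  classical
  -- far set
  set F : Set V := {v | v ∉ S ∧ ∀ w, G.Adj v w → w ∉ S} with hFdef
  have hFmem : ∀ v, v ∈ F ↔ (v ∉ S ∧ ∀ w, G.Adj v w → w ∉ S) := fun v => Iff.rfl
  -- generic claw-based bound
  have CLgen : ∀ (z : V) (t : Finset V),
      (∀ x ∈ t, G.Adj z x) → (∀ x ∈ t, ∀ y ∈ t, ¬G.Adj x y) → t.card ≤ 2 := by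
    intro z t hadj hp
    by_contra hcon
    push_neg at hcon
    obtain ⟨x, hx, y, hy, w, hw, hxy, hxw, hyw⟩ := three_distinct (s := t) (by omega)
    exact claw z x y w (hadj x hx) (hadj y hy) (hadj w hw) hxy hxw hyw
      (hp x hx y hy) (hp x hx w hw) (hp y hy w hw)
  have CL2 : ∀ (z : V) (i : ℕ),
      ((G.neighborFinset z).filter (fun w => c₀ w = i)).card ≤ 2 := by
    intro z i
    apply CLgen z
    · intro x hx
      rw [Finset.mem_filter, SimpleGraph.mem_neighborFinset] at hx
      exact hx.1
    · intro x hx y hy hadj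
      rw [Finset.mem_filter] at hx hy
      exact hcp hadj (hx.2.trans hy.2.symm)
  -- degree bound ≤ 4 for every vertex
  have hdeg4 : ∀ z : V, G.degree z ≤ 4 := by
    intro z
    have hsplit : G.neighborFinset z =
        ((G.neighborFinset z).filter (fun w => c₀ w = 0) ∪
         (G.neighborFinset z).filter (fun w => c₀ w = 1)) ∪
         (G.neighborFinset z).filter (fun w => c₀ w = 2) := by
      ext w
      simp only [Finset.mem_union, Finset.mem_filter]
      constructor
      · intro h
        have := hc3 w
        rcases (by omega : c₀ w = 0 ∨ c₀ w = 1 ∨ c₀ w = 2) with h0 | h0 | h0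
        · exact Or.inl (Or.inl ⟨h, h0⟩)
        · exact Or.inl (Or.inr ⟨h, h0⟩)
        · exact Or.inr ⟨h, h0⟩
      · rintro ((⟨h, _⟩ | ⟨h, _⟩) | ⟨h, _⟩) <;> exact h
    have hzero : ((G.neighborFinset z).filter (fun w => c₀ w = c₀ z)).card = 0 := by
      rw [Finset.card_eq_zero]
      rw [Finset.eq_empty_iff_forall_notMem]
      intro w hw
      rw [Finset.mem_filter, SimpleGraph.mem_neighborFinset] at hw
      exact hcp hw.1 hw.2.symm
    have h01 := CL2 z 0; have h11 := CL2 z 1; have h21 := CL2 z 2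
    have hle : G.degree z ≤
        ((G.neighborFinset z).filter (fun w => c₀ w = 0)).card +
        ((G.neighborFinset z).filter (fun w => c₀ w = 1)).card +
        ((G.neighborFinset z).filter (fun w => c₀ w = 2)).card := by
      have hcardeq := congrArg Finset.card hsplit
      rw [SimpleGraph.degree]
      have u1 := Finset.card_union_le ((G.neighborFinset z).filter (fun w => c₀ w = 0))
        ((G.neighborFinset z).filter (fun w => c₀ w = 1))
      have u2 := Finset.card_union_le
        (((G.neighborFinset z).filter (fun w => c₀ w = 0)) ∪
          ((G.neighborFinset z).filter (fun w => c₀ w = 1)))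
        ((G.neighborFinset z).filter (fun w => c₀ w = 2))
      omega
    rcases (by have := hc3 z; omega : c₀ z = 0 ∨ c₀ z = 1 ∨ c₀ z = 2) with h0 | h0 | h0 <;>
      (rw [h0] at hzero; omega)
  -- far degree ≤ 2
  have hfar2 : ∀ q ∈ F, G.degree q ≤ 2 := by
    intro q hq
    rw [hFmem] at hq
    have hsub : G.neighborFinset q ⊆
        (G.neighborFinset q).filter (fun w => w ∉ S ∧ b w ≠ b q) := by
      intro w hw
      rw [Finset.mem_filter]
      have hadj := (SimpleGraph.mem_neighborFinset _ _ _).mp hw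
      have hwS : w ∉ S := hq.2 w hadj
      exact ⟨hw, hwS, fun h => hbp hadj.symm hwS hq.1 h⟩
    calc G.degree q ≤ _ := Finset.card_le_card hsub
      _ ≤ 2 := by
          apply CLgen q
          · intro x hx
            rw [Finset.mem_filter, SimpleGraph.mem_neighborFinset] at hx
            exact hx.1
          · intro x hx y hy hadj
            rw [Finset.mem_filter] at hx hy
            have hbx := hb2 x; have hby := hb2 y; have hbq := hb2 q
            have h1 := hx.2.2; have h2 := hy.2.2
            exact hbp hadj hx.2.1 hy.2.1 (by omega)
  -- anchors have a unique far neighbour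
  have huniq : ∀ u, u ∉ F → ∀ q ∈ F, ∀ q' ∈ F, G.Adj u q → G.Adj u q' → q = q' := by
    intro u huF q hqF q' hq'F hadj hadj'
    by_contra hne
    rw [hFmem] at hqF hq'F
    have huS : u ∉ S := hqF.2 u hadj.symm
    have hex : ∃ w, G.Adj u w ∧ w ∈ S := by
      by_contra hno
      push_neg at hno
      exact huF ⟨huS, fun w hw => hno w hw⟩
    obtain ⟨s₀, hs₀adj, hs₀S⟩ := hex
    have hqs : q ≠ s₀ := fun h => hqF.1 (h ▸ hs₀S)
    have hq's : q' ≠ s₀ := fun h => hq'F.1 (h ▸ hs₀S)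
    have hbq : b q ≠ b u := hbp hadj.symm hqF.1 huS
    have hbq' : b q' ≠ b u := hbp hadj'.symm hq'F.1 huS
    have hnadj : ¬G.Adj q q' := by
      intro h
      have := hbp h hqF.1 hq'F.1
      have h1 := hb2 q; have h2 := hb2 q'; have h3 := hb2 u
      omega
    have hnqs : ¬G.Adj q s₀ := fun h => (hqF.2 s₀ h) hs₀S
    have hnq's : ¬G.Adj q' s₀ := fun h => (hq'F.2 s₀ h) hs₀S
    exact claw u q q' s₀ hadj hadj' hs₀adj hne hqs hq's hnadj hnqs hnq's
  -- component colourings via choice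
  have hbF : ∀ x ∈ F, ∀ y ∈ F, G.Adj x y → b x ≠ b y := by
    intro x hx y hy hadj
    rw [hFmem] at hx hy
    exact hbp hadj hx.1 hy.1
  have comp_ex : ∀ v ∈ F, ∃ ψ : V → ℕ, compProp G F c₀ {x | (farG G F).Reachable v x} ψ :=
    fun v hv => comp_coloring G F b c₀ hfar2 huniq hb2 hbF v hv
  set Kc : V → Set V := fun v => {x | (farG G F).Reachable v x} with hKcdef
  have hself : ∀ v, v ∈ Kc v := fun v => SimpleGraph.Reachable.refl v
  have hKeq : ∀ v x, x ∈ Kc v → Kc v = Kc x := by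
    intro v x hx
    ext y
    constructor
    · intro hy
      exact (Set.mem_setOf_eq ▸ hx).symm.trans hy
    · intro hy
      exact (Set.mem_setOf_eq ▸ hx).trans hy
  have hKsub : ∀ v ∈ F, ∀ x ∈ Kc v, x ∈ F := by
    intro v hv x hx
    obtain ⟨w⟩ := hx
    exact farG_walk_mem w hv
  set Φ : Set V → (V → ℕ) := fun Ks =>
    if h : ∃ ψ : V → ℕ, compProp G F c₀ Ks ψ then h.choose else fun _ => 0 with hΦdef
  have hΦ : ∀ v ∈ F, compProp G F c₀ (Kc v) (Φ (Kc v)) := by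
    intro v hv
    have h : ∃ ψ : V → ℕ, compProp G F c₀ (Kc v) ψ := comp_ex v hv
    rw [hΦdef]
    simp only [dif_pos h]
    exact h.choose_spec
  set Ψ : V → ℕ := fun v => Φ (Kc v) v with hΨdef
  have hΨeq : ∀ v, ∀ x ∈ Kc v, Ψ x = Φ (Kc v) x := by
    intro v x hx
    rw [hΨdef]
    simp only
    rw [← hKeq v x hx]
  -- the final colouring
  set φ : V → ℕ := fun v => if v ∈ F then Ψ v else c₀ v with hφdef
  have hφF : ∀ v ∈ F, φ v = Ψ v := by intro v hv; rw [hφdef]; simp [hv]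
  have hφNF : ∀ v, v ∉ F → φ v = c₀ v := by intro v hv; rw [hφdef]; simp [hv]
  have hrange : ∀ v, φ v < 3 := by
    intro v
    by_cases hv : v ∈ F
    · rw [hφF v hv]
      rw [hΨeq v v (hself v)]
      exact (hΦ v hv).1 v (hself v)
    · rw [hφNF v hv]; exact hc3 v
  have hproper : ∀ ⦃x y⦄, G.Adj x y → φ x ≠ φ y := by
    intro x y hadj
    by_cases hx : x ∈ F <;> by_cases hy : y ∈ F
    · rw [hφF x hx, hφF y hy]
      have hyK : y ∈ Kc x := (SimpleGraph.Adj.reachable ⟨hadj, hx, hy⟩ : (farG G F).Reachable x y)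
      rw [hΨeq x x (hself x), hΨeq x y hyK]
      exact (hΦ x hx).2.1 x (hself x) y hyK hadj
    · rw [hφF x hx, hφNF y hy]
      rw [hΨeq x x (hself x)]
      exact (hΦ x hx).2.2.1 x (hself x) y hadj hy
    · rw [hφNF x hx, hφF y hy]
      rw [hΨeq y y (hself y)]
      exact fun h => ((hΦ y hy).2.2.1 y (hself y) x hadj.symm hx) h.symm
    · rw [hφNF x hx, hφNF y hy]
      exact hcp hadj
  refine ⟨φ, hrange, hproper, ?_⟩
  -- counting
  set Tn : Finset V := Finset.univ.filter (fun v => v ∉ F ∧ c₀ v = 2) with hTndef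
  set Tf : Finset V := Finset.univ.filter (fun v => v ∈ F ∧ Ψ v = 2) with hTfdef
  have hTsplit : Finset.univ.filter (fun v => φ v = 2) = Tn ∪ Tf := by
    ext v
    simp only [hTndef, hTfdef, Finset.mem_union, Finset.mem_filter, Finset.mem_univ, true_and]
    by_cases hv : v ∈ F
    · rw [hφF v hv]
      constructor
      · intro h; exact Or.inr ⟨hv, h⟩
      · rintro (⟨h, _⟩ | ⟨_, h⟩)
        · exact absurd hv h
        · exact h
    · rw [hφNF v hv]
      constructor
      · intro h; exact Or.inl ⟨hv, h⟩
      · rintro (⟨_, h⟩ | ⟨h, _⟩)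
        · exact h
        · exact absurd h hv
  have hTdisj : Disjoint Tn Tf := by
    rw [Finset.disjoint_left]
    intro v hv hv'
    rw [hTndef, Finset.mem_filter] at hv
    rw [hTfdef, Finset.mem_filter] at hv'
    exact hv.2.1 hv'.2.1
  -- witnesses for far 2s
  have hTfF : ∀ y ∈ Tf, y ∈ F := by
    intro y hy; rw [hTfdef, Finset.mem_filter] at hy; exact hy.2.1
  have hTf2 : ∀ y ∈ Tf, Φ (Kc y) y = 2 := by
    intro y hy
    rw [← hΨeq y y (hself y)]
    rw [hTfdef, Finset.mem_filter] at hy; exact hy.2.2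
  have hWit : ∀ y ∈ Tf, ∃ p : V × V, p.1 ≠ p.2 ∧ p.1 ∉ F ∧ p.2 ∉ F ∧ c₀ p.1 ≠ 2 ∧ c₀ p.2 ≠ 2 ∧
      (∃ q ∈ Kc y, G.Adj q p.1) ∧ (∃ q ∈ Kc y, G.Adj q p.2) := by
    intro y hy
    obtain ⟨u1, u2, h1, h2, h3, h4, h5, h6, h7⟩ :=
      (hΦ y (hTfF y hy)).2.2.2.2 y (hself y) (hTf2 y hy)
    exact ⟨(u1, u2), h1, h2, h3, h4, h5, h6, h7⟩
  set W : V → V × V := fun y =>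
    if h : ∃ p : V × V, p.1 ≠ p.2 ∧ p.1 ∉ F ∧ p.2 ∉ F ∧ c₀ p.1 ≠ 2 ∧ c₀ p.2 ≠ 2 ∧
      (∃ q ∈ Kc y, G.Adj q p.1) ∧ (∃ q ∈ Kc y, G.Adj q p.2) then h.choose else (y, y)
    with hWdef
  have hW : ∀ y ∈ Tf, (W y).1 ≠ (W y).2 ∧ (W y).1 ∉ F ∧ (W y).2 ∉ F ∧
      c₀ (W y).1 ≠ 2 ∧ c₀ (W y).2 ≠ 2 ∧
      (∃ q ∈ Kc y, G.Adj q (W y).1) ∧ (∃ q ∈ Kc y, G.Adj q (W y).2) := by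
    intro y hy
    have h := hWit y hy
    rw [hWdef]
    simp only [dif_pos h]
    exact h.choose_spec
  -- distinct far 2s live in distinct components, anchors pin components
  have hTfcomp : ∀ y ∈ Tf, ∀ y' ∈ Tf, Kc y = Kc y' → y = y' := by
    intro y hy y' hy' heq
    have h2' : Φ (Kc y) y' = 2 := by rw [heq]; exact hTf2 y' hy'
    have hmem' : y' ∈ Kc y := by rw [heq]; exact hself y'
    exact (hΦ y (hTfF y hy)).2.2.2.1 y (hself y) (hTf2 y hy) y' hmem' h2'
  have hpin : ∀ u, u ∉ F → ∀ y ∈ Tf, ∀ y' ∈ Tf,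
      (∃ q ∈ Kc y, G.Adj q u) → (∃ q ∈ Kc y', G.Adj q u) → y = y' := by
    intro u huF y hy y' hy' ⟨q, hqK, hqadj⟩ ⟨q', hq'K, hq'adj⟩
    have hqF : q ∈ F := hKsub y (hTfF y hy) q hqK
    have hq'F : q' ∈ F := hKsub y' (hTfF y' hy') q' hq'K
    have heq : q = q' := huniq u huF q hqF q' hq'F hqadj.symm hq'adj.symm
    subst heq
    apply hTfcomp y hy y' hy'
    rw [hKeq y q hqK, hKeq y' q hq'K]
  -- the pinned anchor set
  set U : Finset V := Tf.biUnion (fun y => {(W y).1, (W y).2}) with hUdef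
  have hUcard : U.card = 2 * Tf.card := by
    rw [hUdef, Finset.card_biUnion]
    · rw [Finset.sum_congr rfl (fun y hy => ?_), Finset.sum_const, smul_eq_mul, Nat.mul_comm]
      rw [Finset.card_insert_of_notMem (by simpa using (hW y hy).1), Finset.card_singleton]
    · intro y hy y' hy' hne
      rw [Function.onFun, Finset.disjoint_left]
      intro u hu hu'
      simp only [Finset.mem_insert, Finset.mem_singleton] at hu hu'
      have h := hW y hy
      have h' := hW y' hy'
      have huF : u ∉ F := by rcases hu with rfl | rfl; exacts [h.2.1, h.2.2.1]
      have hay : ∃ q ∈ Kc y, G.Adj q u := by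
        rcases hu with rfl | rfl; exacts [h.2.2.2.2.2.1, h.2.2.2.2.2.2]
      have hay' : ∃ q ∈ Kc y', G.Adj q u := by
        rcases hu' with rfl | rfl; exacts [h'.2.2.2.2.2.1, h'.2.2.2.2.2.2]
      exact hne (hpin u huF y hy y' hy' hay hay')
  have hUprop : ∀ u ∈ U, u ∉ F ∧ c₀ u ≠ 2 ∧ ∃ q ∈ F, G.Adj q u := by
    intro u hu
    rw [hUdef] at hu
    obtain ⟨y, hy, hmem⟩ := Finset.mem_biUnion.mp hu
    have h := hW y hy
    simp only [Finset.mem_insert, Finset.mem_singleton] at hmem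
    rcases hmem with rfl | rfl
    · obtain ⟨q, hqK, hqadj⟩ := h.2.2.2.2.2.1
      exact ⟨h.2.1, h.2.2.2.1, q, hKsub y (hTfF y hy) q hqK, hqadj⟩
    · obtain ⟨q, hqK, hqadj⟩ := h.2.2.2.2.2.2
      exact ⟨h.2.2.1, h.2.2.2.2.1, q, hKsub y (hTfF y hy) q hqK, hqadj⟩
  -- choose an S-neighbour for each pinned anchor
  have hUS : ∀ u ∈ U, ∃ w, w ∈ S ∧ G.Adj u w := by
    intro u hu
    obtain ⟨huF, _, q, hqF, hqadj⟩ := hUprop u hu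
    have huS : u ∉ S := by
      rw [hFmem] at hqF
      exact hqF.2 u hqadj
    by_contra hno
    push_neg at hno
    exact huF ⟨huS, fun w hw => fun hwS => (hno w hwS) hw⟩
  set su : V → V := fun u => if h : ∃ w, w ∈ S ∧ G.Adj u w then h.choose else u with hsudef
  have hsu : ∀ u ∈ U, su u ∈ S ∧ G.Adj u (su u) := by
    intro u hu
    have h := hUS u hu
    rw [hsudef]
    simp only [dif_pos h]
    exact h.choose_spec
  -- covering sums
  have hcoverTn : Tn.card ≤ ∑ s ∈ S, (Tn ∩ insert s (G.neighborFinset s)).card := by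
    have hsub : Tn ⊆ S.biUnion (fun s => Tn ∩ insert s (G.neighborFinset s)) := by
      intro x hx
      have hxF : x ∉ F := by rw [hTndef, Finset.mem_filter] at hx; exact hx.2.1
      rw [hFdef, Set.mem_setOf_eq] at hxF
      push_neg at hxF
      by_cases hxS : x ∈ S
      · exact Finset.mem_biUnion.mpr ⟨x, hxS, Finset.mem_inter.mpr ⟨hx, Finset.mem_insert_self _ _⟩⟩
      · obtain ⟨w, hwadj, hwS⟩ := hxF hxS
        refine Finset.mem_biUnion.mpr ⟨w, hwS, Finset.mem_inter.mpr ⟨hx, ?_⟩⟩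
        exact Finset.mem_insert_of_mem ((SimpleGraph.mem_neighborFinset _ _ _).mpr hwadj.symm)
    exact le_trans (Finset.card_le_card hsub) (Finset.card_biUnion_le)
  have hcoverU : U.card ≤ ∑ s ∈ S, (U.filter (fun u => su u = s)).card := by
    have hsub : U ⊆ S.biUnion (fun s => U.filter (fun u => su u = s)) := by
      intro u hu
      exact Finset.mem_biUnion.mpr ⟨su u, (hsu u hu).1, Finset.mem_filter.mpr ⟨hu, rfl⟩⟩
    exact le_trans (Finset.card_le_card hsub) (Finset.card_biUnion_le)
  -- the per-vertex load bound
  have hload : ∀ s ∈ S, 2 * (Tn ∩ insert s (G.neighborFinset s)).card +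
      (U.filter (fun u => su u = s)).card ≤ 6 := by
    intro s hs
    set Us : Finset V := U.filter (fun u => su u = s) with hUsdef
    have hUsnb : Us ⊆ G.neighborFinset s := by
      intro u hu
      rw [hUsdef, Finset.mem_filter] at hu
      have h := hsu u hu.1
      rw [hu.2] at h
      exact (SimpleGraph.mem_neighborFinset _ _ _).mpr h.2.symm
    have hTnnb : Tn ∩ G.neighborFinset s ⊆
        (G.neighborFinset s).filter (fun w => c₀ w = 2) := by
      intro x hx
      rw [Finset.mem_inter] at hx
      rw [Finset.mem_filter]
      refine ⟨hx.2, ?_⟩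
      rw [hTndef, Finset.mem_filter] at hx
      exact hx.1.2.2
    have ha2 : (Tn ∩ G.neighborFinset s).card ≤ 2 :=
      le_trans (Finset.card_le_card hTnnb) (CL2 s 2)
    have hdisjTU : Disjoint (Tn ∩ G.neighborFinset s) Us := by
      rw [Finset.disjoint_left]
      intro u hu hu'
      rw [Finset.mem_inter, hTndef, Finset.mem_filter] at hu
      rw [hUsdef, Finset.mem_filter] at hu'
      exact (hUprop u hu'.1).2.1 hu.1.2.2
    have hsumdeg : (Tn ∩ G.neighborFinset s).card + Us.card ≤ 4 := by
      have : (Tn ∩ G.neighborFinset s) ∪ Us ⊆ G.neighborFinset s :=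
        Finset.union_subset (Finset.inter_subset_right) hUsnb
      have hc := Finset.card_le_card this
      rw [Finset.card_union_of_disjoint hdisjTU] at hc
      exact le_trans hc (hdeg4 s)
    have hinsert : (Tn ∩ insert s (G.neighborFinset s)).card ≤
        (Tn ∩ G.neighborFinset s).card + 1 := by
      have : Tn ∩ insert s (G.neighborFinset s) ⊆ insert s (Tn ∩ G.neighborFinset s) := by
        intro x hx
        rw [Finset.mem_inter, Finset.mem_insert] at hx
        rcases hx.2 with rfl | h
        · exact Finset.mem_insert_self _ _
        · exact Finset.mem_insert_of_mem (Finset.mem_inter.mpr ⟨hx.1, h⟩)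
      exact le_trans (Finset.card_le_card this) (Finset.card_insert_le _ _)
    by_cases hcs : c₀ s = 2
    · have hTnnbzero : Tn ∩ G.neighborFinset s = ∅ := by
        rw [Finset.eq_empty_iff_forall_notMem]
        intro x hx
        rw [Finset.mem_inter, hTndef, Finset.mem_filter] at hx
        have hadj := (SimpleGraph.mem_neighborFinset _ _ _).mp hx.2
        exact hcp hadj (hcs.trans hx.1.2.2.symm)
      rw [hTnnbzero] at hinsert hsumdeg
      simp only [Finset.card_empty] at hinsert hsumdeg
      omega
    · have hsTn : s ∉ Tn := by
        intro h
        rw [hTndef, Finset.mem_filter] at h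
        exact hcs h.2.2
      have heq : Tn ∩ insert s (G.neighborFinset s) ⊆ Tn ∩ G.neighborFinset s := by
        intro x hx
        rw [Finset.mem_inter, Finset.mem_insert] at hx
        rcases hx.2 with rfl | h
        · exact absurd hx.1 hsTn
        · exact Finset.mem_inter.mpr ⟨hx.1, h⟩
      have := Finset.card_le_card heq
      omega
  -- finale
  have hTotal : 2 * Tn.card + U.card ≤ 6 * S.card := by
    calc 2 * Tn.card + U.card
        ≤ 2 * (∑ s ∈ S, (Tn ∩ insert s (G.neighborFinset s)).card) +
          ∑ s ∈ S, (U.filter (fun u => su u = s)).card := by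
          have := hcoverTn; have := hcoverU; omega
      _ = ∑ s ∈ S, (2 * (Tn ∩ insert s (G.neighborFinset s)).card +
          (U.filter (fun u => su u = s)).card) := by
          rw [Finset.sum_add_distrib, Finset.mul_sum]
      _ ≤ ∑ _s ∈ S, 6 := Finset.sum_le_sum hload
      _ = 6 * S.card := by rw [Finset.sum_const]; ring
  rw [hTsplit, Finset.card_union_of_disjoint hTdisj]
  omega
end


-- claw extraction
lemma claw_of_free {V : Type*} {G : SimpleGraph V} (hfree : HFree (starG 3) G) :
    ∀ z x y w : V, G.Adj z x → G.Adj z y → G.Adj z w → x ≠ y → x ≠ w → y ≠ w →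
      ¬G.Adj x y → ¬G.Adj x w → ¬G.Adj y w → False := by
  intro z x y w hzx hzy hzw hxy hxw hyw nxy nxw nyw
  apply hfree.false
  have hl : ∀ i : Fin 3, G.Adj z (![x, y, w] i) := by
    intro i; fin_cases i <;> assumption
  have hne : ∀ i : Fin 3, z ≠ (![x, y, w] i) := by
    intro i; exact (hl i).ne
  have hinj : Function.Injective (![x, y, w]) := by
    intro i j hij
    fin_cases i <;> fin_cases j <;> simp_all <;>
      first
        | rfl
        | exact absurd hij hxy | exact absurd hij hxw | exact absurd hij hyw
        | exact absurd hij.symm hxy | exact absurd hij.symm hxw | exact absurd hij.symm hyw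
  have hnn : ∀ i j : Fin 3, i ≠ j → ¬G.Adj (![x, y, w] i) (![x, y, w] j) := by
    intro i j hij
    fin_cases i <;> fin_cases j <;> simp_all <;>
      first
        | exact nxy | exact nxw | exact nyw
        | exact fun h => nxy h.symm | exact fun h => nxw h.symm | exact fun h => nyw h.symm
  refine ⟨⟨Sum.elim (fun _ => z) (![x, y, w]), ?_⟩, ?_⟩
  · intro a b hab
    match a, b with
    | Sum.inl a, Sum.inl b => simp
    | Sum.inl a, Sum.inr j => exact absurd hab (hne j)
    | Sum.inr i, Sum.inl b => exact absurd hab.symm (hne i)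
    | Sum.inr i, Sum.inr j => simp only [Sum.elim_inr] at hab; rw [hinj hab]
  · intro a b
    match a, b with
    | Sum.inl a, Sum.inl b =>
      constructor
      · intro h; exact absurd h G.irrefl
      · intro h
        rw [starG, SimpleGraph.fromRel_adj] at h
        rcases h.2 with ⟨i, h1, h2⟩ | ⟨i, h1, h2⟩ <;> simp at h2
    | Sum.inl a, Sum.inr j =>
      constructor
      · intro _
        rw [starG, SimpleGraph.fromRel_adj]
        exact ⟨by simp, Or.inl ⟨j, by simp, rfl⟩⟩
      · intro _; exact hl j
    | Sum.inr i, Sum.inl b =>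
      constructor
      · intro _
        rw [starG, SimpleGraph.fromRel_adj]
        exact ⟨by simp, Or.inr ⟨i, by simp, rfl⟩⟩
      · intro _; exact (hl i).symm
    | Sum.inr i, Sum.inr j =>
      constructor
      · intro h
        by_cases hij : i = j
        · subst hij; exact absurd h G.irrefl
        · exact absurd h (hnn i j hij)
      · intro h
        rw [starG, SimpleGraph.fromRel_adj] at h
        rcases h.2 with ⟨k, h1, h2⟩ | ⟨k, h1, h2⟩ <;> simp at h1

theorem stmt_15 {V : Type*} [Fintype V] (G : SimpleGraph V)
    (hcol : G.Colorable 3) (hfree : HFree (starG 3) G) :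
    ioct G ≤ 3 * oct G := by
  classical
  letI : DecidableRel G.Adj := Classical.decRel _
  -- oct is attained
  have hempty : IsEmpty ((↑(Finset.univ : Finset V) : Set V)ᶜ : Set V) := by
    rw [Finset.coe_univ, Set.compl_univ]
    exact Set.isEmpty_coe_sort.mpr rfl
  have noct : {n | ∃ S : Finset V, IsOCT G S ∧ S.card = n}.Nonempty := by
    refine ⟨(Finset.univ : Finset V).card, Finset.univ, ?_, rfl⟩
    unfold IsOCT
    exact @SimpleGraph.Colorable.of_isEmpty _ _ hempty 2
  obtain ⟨S, hSoct, hScard⟩ := Nat.sInf_mem noct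
  -- colourings
  obtain ⟨C⟩ := hcol
  obtain ⟨B⟩ := hSoct
  set c₀ : V → ℕ := fun v => (C v).val with hc₀def
  have hc3 : ∀ v, c₀ v < 3 := fun v => (C v).isLt
  have hcp : ∀ ⦃x y⦄, G.Adj x y → c₀ x ≠ c₀ y := by
    intro x y hadj h
    exact C.valid hadj (Fin.val_injective h)
  set b : V → ℕ := fun v => if h : v ∈ ((↑S : Set V)ᶜ : Set V) then (B ⟨v, h⟩).val else 0
    with hbdef
  have hb2 : ∀ v, b v < 2 := by
    intro v
    rw [hbdef]
    by_cases h : v ∈ ((↑S : Set V)ᶜ : Set V)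
    · simp only [dif_pos h]; exact (B ⟨v, h⟩).isLt
    · simp only [dif_neg h]; omega
  have hbp : ∀ ⦃x y⦄, G.Adj x y → x ∉ S → y ∉ S → b x ≠ b y := by
    intro x y hadj hx hy
    have hx' : x ∈ ((↑S : Set V)ᶜ : Set V) := by simpa using hx
    have hy' : y ∈ ((↑S : Set V)ᶜ : Set V) := by simpa using hy
    rw [hbdef]
    simp only [dif_pos hx', dif_pos hy']
    intro h
    have hadj' : (G.induce ((↑S : Set V)ᶜ)).Adj ⟨x, hx'⟩ ⟨y, hy'⟩ := hadj
    exact B.valid hadj' (Fin.val_injective h)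
  obtain ⟨φ, hrange, hproper, hcount⟩ :=
    main_tech G (claw_of_free hfree) c₀ hc3 hcp S b hb2 hbp
  set T : Finset V := Finset.univ.filter (fun v => φ v = 2) with hTdef
  have hmemT : ∀ v, v ∈ T ↔ φ v = 2 := by
    intro v; rw [hTdef]; simp
  -- T is an independent OCT
  have hIS : IsIS G ↑T := by
    intro x hx y hy _
    intro hadj
    rw [Finset.mem_coe, hmemT] at hx hy
    exact hproper hadj (hx.trans hy.symm)
  have hOCT : IsOCT G T := by
    unfold IsOCT
    refine ⟨SimpleGraph.Coloring.mk (fun v => if φ v.val = 0 then 0 else 1) ?_⟩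
    intro u v hadj h
    have hadj' : G.Adj u.val v.val := hadj
    have hu : φ u.val ≠ 2 := by
      have := u.prop
      simp only [Set.mem_compl_iff, Finset.mem_coe, hmemT] at this
      exact this
    have hv : φ v.val ≠ 2 := by
      have := v.prop
      simp only [Set.mem_compl_iff, Finset.mem_coe, hmemT] at this
      exact this
    have h3u := hrange u.val
    have h3v := hrange v.val
    have hne := hproper hadj'
    by_cases h0u : φ u.val = 0 <;> by_cases h0v : φ v.val = 0
    · exact hne (h0u.trans h0v.symm)
    · rw [if_pos h0u, if_neg h0v] at h; exact absurd h (by simp)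
    · rw [if_neg h0u, if_pos h0v] at h; exact absurd h (by simp)
    · rw [if_neg h0u, if_neg h0v] at h
      have : φ u.val = 1 := by omega
      have : φ v.val = 1 := by omega
      omega
  have hioct : ioct G ≤ T.card := Nat.sInf_le ⟨T, hOCT, hIS, rfl⟩
  calc ioct G ≤ T.card := hioct
    _ ≤ 3 * S.card := hcount
    _ = 3 * oct G := by rw [hScard]; rfl
end

section
/- For s ≥ 2, let Q_s be the graph built from three disjoint independent sets A, B, C each of size s, with chosen vertices a ∈ A, b ∈ B, c ∈ C, where a is complete to B∪C, b is complete to A∪C, and c is complete to A∪B (and there are no other edges). Then Q_s is 3-colourable, oct(Q_s) = 2, and every independent odd cycle transversal of Q_s has size at least s. -/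
open SimpleGraph

/-- The graph `Q_s`: three independent sets `A = {0} × Fin s`, `B = {1} × Fin s`,
`C = {2} × Fin s` with chosen vertices `a = (0,0)`, `b = (1,0)`, `c = (2,0)`,
where each chosen vertex is complete to the union of the other two sets,
and there are no other edges. -/
def Qgraph (s : ℕ) : SimpleGraph (Fin 3 × Fin s) :=
  SimpleGraph.fromRel fun u v => u.1 ≠ v.1 ∧ ((u.2 : ℕ) = 0 ∨ (v.2 : ℕ) = 0)

/-!
For a vertex `x` in class `i`, the vertex `x` and the hubs of the two other classes form a
triangle. Taking `x` to be the hub of class `i` shows that every odd cycle transversal `S`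
contains some hub `(j, 0)`; the triangle through a non-hub vertex of class `j` then gives a
second vertex of `S`. If `S` is independent it cannot contain the other two hubs, so it must
contain every vertex of class `j`. Conversely, deleting two hubs leaves a star centred at the
third hub together with isolated vertices, which is bipartite.
-/

lemma IsIS.notMem_of_adj {V : Type*} {G : SimpleGraph V} {S : Set V} (hS : IsIS G S)
    {u v : V} (hu : u ∈ S) (huv : G.Adj u v) : v ∉ S :=
  fun hv => hS hu hv huv.ne huv

lemma IsOCT.mem_or_mem_or_mem_of_adj {V : Type*} {G : SimpleGraph V} {S : Finset V}
    (hS : IsOCT G S) {x y z : V} (hxy : G.Adj x y) (hyz : G.Adj y z) (hxz : G.Adj x z) :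
    x ∈ S ∨ y ∈ S ∨ z ∈ S := by
  by_contra! h
  obtain ⟨hx, hy, hz⟩ := h
  obtain ⟨c⟩ := hS
  have cxy := c.valid (v := ⟨y, hy⟩) (w := ⟨x, hx⟩) hxy.symm
  have cyz := c.valid (v := ⟨y, hy⟩) (w := ⟨z, hz⟩) hyz
  have cxz := c.valid (v := ⟨x, hx⟩) (w := ⟨z, hz⟩) hxz
  -- three pairwise distinct colours in `Fin 2`
  revert cxy cyz cxz
  generalize c ⟨x, hx⟩ = p, c ⟨y, hy⟩ = q, c ⟨z, hz⟩ = r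
  revert p q r
  decide

lemma fin_three_add_ne (i : Fin 3) : i + 1 ≠ i ∧ i + 2 ≠ i ∧ i + 1 ≠ i + 2 := by
  revert i; decide

namespace Qgraph

variable {s : ℕ}

lemma adj_iff [NeZero s] {u v : Fin 3 × Fin s} :
    (Qgraph s).Adj u v ↔ u.1 ≠ v.1 ∧ (u.2 = 0 ∨ v.2 = 0) := by
  simp only [Qgraph, fromRel_adj, Fin.val_eq_zero_iff, ne_eq, Prod.ext_iff]
  grind

lemma colorable_three : (Qgraph s).Colorable 3 := by
  refine ⟨Coloring.mk Prod.fst fun {u v} h => ?_⟩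
  obtain ⟨-, huv | huv⟩ := h
  exacts [huv.1, huv.1.symm]

lemma adj_hub [NeZero s] {i j : Fin 3} (hij : i ≠ j) (x : Fin s) :
    (Qgraph s).Adj (i, 0) (j, x) :=
  adj_iff.2 ⟨hij, Or.inl rfl⟩

lemma mem_or_mem_hubs_of_isOCT [NeZero s] {S : Finset (Fin 3 × Fin s)} (hS : IsOCT (Qgraph s) S)
    (i : Fin 3) (x : Fin s) : (i, x) ∈ S ∨ (i + 1, 0) ∈ S ∨ (i + 2, 0) ∈ S := by
  have hi := fin_three_add_ne i
  exact hS.mem_or_mem_or_mem_of_adj (adj_hub hi.1 x).symm (adj_hub hi.2.2 0)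
    (adj_hub hi.2.1 x).symm

lemma exists_hub_mem [NeZero s] {S : Finset (Fin 3 × Fin s)} (hS : IsOCT (Qgraph s) S) :
    ∃ j : Fin 3, (j, 0) ∈ S := by
  rcases mem_or_mem_hubs_of_isOCT hS 0 0 with h | h | h <;> exact ⟨_, h⟩

lemma isOCT_hub_pair [NeZero s] : IsOCT (Qgraph s) {(0, 0), (1, 0)} := by
  refine ⟨Coloring.mk (fun v => if v.1.1 = 2 then 0 else 1) fun {u v} h => ?_⟩
  obtain ⟨⟨a, x⟩, hu⟩ := u
  obtain ⟨⟨b, y⟩, hv⟩ := v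
  obtain ⟨hab, rfl | rfl⟩ := adj_iff.1 (show (Qgraph s).Adj (a, x) (b, y) from h)
  all_goals
    simp only [Set.mem_compl_iff, Finset.coe_insert, Finset.coe_singleton, Set.mem_insert_iff,
      Set.mem_singleton_iff, Prod.ext_iff, and_true] at hu hv ⊢
    grind

lemma two_le_card_of_isOCT (hs : 2 ≤ s) {S : Finset (Fin 3 × Fin s)}
    (hS : IsOCT (Qgraph s) S) : 2 ≤ S.card := by
  have : NeZero s := ⟨by omega⟩
  obtain ⟨j, hj⟩ := exists_hub_mem hS
  have hj' := fin_three_add_ne j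
  refine Finset.one_lt_card.2 ⟨(j, 0), hj, ?_⟩
  rcases mem_or_mem_hubs_of_isOCT hS j ⟨1, hs⟩ with h | h | h
  · exact ⟨_, h, fun he => by simpa using congrArg (Fin.val ∘ Prod.snd) he⟩
  · exact ⟨_, h, fun he => hj'.1 (congrArg Prod.fst he).symm⟩
  · exact ⟨_, h, fun he => hj'.2.1 (congrArg Prod.fst he).symm⟩

lemma oct_eq_two (hs : 2 ≤ s) : oct (Qgraph s) = 2 := by
  have : NeZero s := ⟨by omega⟩
  have hpair : 2 ∈ {n | ∃ S : Finset (Fin 3 × Fin s), IsOCT (Qgraph s) S ∧ S.card = n} :=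
    ⟨_, isOCT_hub_pair, Finset.card_pair fun h => by simpa using congrArg Prod.fst h⟩
  refine le_antisymm (Nat.sInf_le hpair) (le_csInf ⟨2, hpair⟩ ?_)
  rintro n ⟨S, hS, rfl⟩
  exact two_le_card_of_isOCT hs hS

lemma card_le_card_of_isOCT_of_isIS [NeZero s] {S : Finset (Fin 3 × Fin s)}
    (hS : IsOCT (Qgraph s) S) (hI : IsIS (Qgraph s) ↑S) : s ≤ S.card := by
  obtain ⟨j, hj⟩ := exists_hub_mem hS
  have hj' := fin_three_add_ne j
  have hclass : ∀ x : Fin s, (j, x) ∈ S := fun x => by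
    rcases mem_or_mem_hubs_of_isOCT hS j x with h | h | h
    · exact h
    · exact absurd h (hI.notMem_of_adj hj (adj_hub hj'.1.symm 0))
    · exact absurd h (hI.notMem_of_adj hj (adj_hub hj'.2.1.symm 0))
  calc s = (Finset.univ : Finset (Fin s)).card := (Finset.card_fin s).symm
    _ ≤ S.card := Finset.card_le_card_of_injOn (fun x => (j, x)) (fun x _ => hclass x)
        fun _ _ _ _ h => congrArg Prod.snd h

end Qgraph

theorem stmt_17 (s : ℕ) (hs : 2 ≤ s) :
    (Qgraph s).Colorable 3 ∧ oct (Qgraph s) = 2 ∧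
      ∀ S : Finset (Fin 3 × Fin s),
        IsOCT (Qgraph s) S → IsIS (Qgraph s) ↑S → s ≤ S.card := by
  have : NeZero s := ⟨by omega⟩
  exact ⟨Qgraph.colorable_three, Qgraph.oct_eq_two hs,
    fun _ hS hI => Qgraph.card_le_card_of_isOCT_of_isIS hS hI⟩
end

section
/- If G is a 3-colourable graph with no independent set on 4 vertices (4P_1-free), then ioct(G) = oct(G). -/
/-!
The colour classes of a 3-colouring are independent odd cycle transversals, and the smallest one
has at most `|V| / 3` vertices. A minimum odd cycle transversal `S` with `|S| ≤ 1` is independent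
anyway. Otherwise `V \ S` is the union of two independent sets, each of at most three vertices, so
`|V| ≤ |S| + 6` and the smallest colour class has at most `(|S| + 6) / 3 ≤ |S|` vertices.
-/

open SimpleGraph

namespace SimpleGraph

variable {V : Type*} (G : SimpleGraph V)

theorem isIS_of_card_le_one {S : Finset V} (hS : S.card ≤ 1) : IsIS G S :=
  fun _ hu _ hv huv _ => huv (Finset.card_le_one.mp hS _ hu _ hv)

theorem isIS_map_subtype {s : Set V} {T : Finset s} (hT : IsIS (G.induce s) T) :
    IsIS G (T.map (Function.Embedding.subtype _)) := by
  simp only [Finset.coe_map, Function.Embedding.subtype_apply]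
  rintro _ ⟨x, hx, rfl⟩ _ ⟨y, hy, rfl⟩ hxy hadj
  exact hT hx hy (fun h => hxy (congrArg Subtype.val h)) (G.induce_adj.mpr hadj)

variable {G} in
theorem Coloring.colorable_induce_compl_colorClass {α : Type*} [Fintype α] (c : G.Coloring α)
    (i : α) : (G.induce (c.colorClass i)ᶜ).Colorable (Fintype.card α - 1) := by
  classical
  let d : (G.induce (c.colorClass i)ᶜ).Coloring {j // j ≠ i} :=
    Coloring.mk (fun v => ⟨c v, v.2⟩) fun h heq => c.valid h (congrArg Subtype.val heq)
  simpa [Fintype.card_subtype_compl] using d.colorable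

theorem oct_le_card {S : Finset V} (hS : IsOCT G S) : oct G ≤ S.card :=
  Nat.sInf_le ⟨S, hS, rfl⟩

theorem ioct_le_card {S : Finset V} (hS : IsOCT G S) (hSI : IsIS G S) : ioct G ≤ S.card :=
  Nat.sInf_le ⟨S, hS, hSI, rfl⟩

variable [Fintype V]

section ColorClass

variable {G} {α : Type*} [DecidableEq α] (c : G.Coloring α)

theorem Coloring.isIS_colorClass (i : α) : IsIS G ↑({v | c v = i} : Finset V) := by
  rw [Finset.coe_filter_univ]
  exact c.isIndepSet_colorClass i

theorem Coloring.isOCT_colorClass [Fintype α] (hcard : Fintype.card α ≤ 3) (i : α) :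
    IsOCT G {v | c v = i} := by
  rw [IsOCT, Finset.coe_filter_univ]
  exact (c.colorable_induce_compl_colorClass i).mono (by omega)

theorem Coloring.exists_card_mul_card_colorClass_le [Fintype α] [Nonempty α] :
    ∃ i, Fintype.card α * ({v | c v = i} : Finset V).card ≤ Fintype.card V := by
  obtain ⟨i, hi⟩ := Fintype.exists_card_fiber_le_of_card_le_nsmul (f := c)
    (b := (Fintype.card V : ℚ) / Fintype.card α)
    (by rw [nsmul_eq_mul, mul_div_cancel₀ _ (by positivity)])
  refine ⟨i, ?_⟩
  rw [le_div_iff₀ (by positivity), mul_comm] at hi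
  exact_mod_cast hi

end ColorClass

theorem isOCT_univ : IsOCT G Finset.univ := by
  rw [IsOCT, Finset.coe_univ, Set.compl_univ]
  exact Colorable.of_isEmpty 2

theorem exists_isOCT_card_eq_oct : ∃ S : Finset V, IsOCT G S ∧ S.card = oct G :=
  Nat.sInf_mem (s := {n | ∃ S : Finset V, IsOCT G S ∧ S.card = n}) ⟨_, _, G.isOCT_univ, rfl⟩

theorem exists_isOCT_isIS_card_eq_ioct (hcol : G.Colorable 3) :
    ∃ S : Finset V, IsOCT G S ∧ IsIS G S ∧ S.card = ioct G := by
  obtain ⟨c⟩ := hcol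
  exact Nat.sInf_mem (s := {n | ∃ S : Finset V, IsOCT G S ∧ IsIS G S ∧ S.card = n})
    ⟨_, _, c.isOCT_colorClass (by simp) 0, c.isIS_colorClass 0, rfl⟩

theorem three_mul_ioct_le_card (hcol : G.Colorable 3) : 3 * ioct G ≤ Fintype.card V := by
  obtain ⟨c⟩ := hcol
  obtain ⟨i, hi⟩ := c.exists_card_mul_card_colorClass_le
  rw [Fintype.card_fin] at hi
  have := G.ioct_le_card (c.isOCT_colorClass (by simp) i) (c.isIS_colorClass i)
  omega

theorem card_le_mul_of_colorable {m k : ℕ} (hcol : G.Colorable m)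
    (hα : ∀ T : Finset V, IsIS G T → T.card ≤ k) : Fintype.card V ≤ m * k := by
  classical
  obtain ⟨c⟩ := hcol
  by_contra! h
  obtain ⟨i, hi⟩ := Fintype.exists_lt_card_fiber_of_mul_lt_card (f := c) (n := k)
    (by rwa [Fintype.card_fin])
  exact (hα _ (c.isIS_colorClass i)).not_gt hi

theorem card_le_card_add_of_isOCT {S : Finset V} {k : ℕ}
    (hα : ∀ T : Finset V, IsIS G T → T.card ≤ k) (hS : IsOCT G S) :
    Fintype.card V ≤ S.card + 2 * k := by
  classical
  have hcompl : Fintype.card ↥(S : Set V)ᶜ = Fintype.card V - S.card := by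
    rw [Fintype.card_compl_set]; simp
  have := (G.induce _).card_le_mul_of_colorable hS fun T hT =>
    (Finset.card_map _).symm.trans_le (hα _ (G.isIS_map_subtype hT))
  omega

end SimpleGraph

theorem stmt_18 {V : Type*} [Fintype V] (G : SimpleGraph V)
    (hcol : G.Colorable 3) (hfree : ∀ S : Finset V, IsIS G ↑S → S.card < 4) :
    ioct G = oct G := by
  obtain ⟨S, hS, hSoct⟩ := G.exists_isOCT_card_eq_oct
  obtain ⟨T, hT, hTI, hTioct⟩ := G.exists_isOCT_isIS_card_eq_ioct hcol
  refine le_antisymm ?_ (hTioct ▸ G.oct_le_card hT)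
  by_cases hsmall : S.card ≤ 1
  · exact hSoct ▸ G.ioct_le_card hS (G.isIS_of_card_le_one hsmall)
  · have hV := G.card_le_card_add_of_isOCT (fun U hU => Nat.le_of_lt_succ (hfree U hU)) hS
    have := G.three_mul_ioct_le_card hcol
    omega
end
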